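/- For t = q^k, 0 < q < 1, and j ∈ ℤ≥1, the ratio μ^•((k+j)/2)/μ^•(-k/2) equals t^{-(j-1)} ∏_{i=1}^{j-1} (1 - t²q^i)/(1 - q^i), and the ratio μ^•(-(k+j)/2)/μ^•(-k/2) equals t^{-j} ∏_{i=1}^{j} (1 - t²q^i)/(1 - q^i). -/

import Mathlib

open Filter

/-- Macdonald's truncated theta function for A₁, complex version (`0 < q < 1`). -/
noncomputable def muC (q : ℝ) (k x : ℂ) : ℂ :=
  ∏' i : ℕ, ((1 - (q : ℂ) ^ ((i : ℂ) + 2 * x)) * (1 - (q : ℂ) ^ ((i : ℂ) + 1 - 2 * x))) /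
    ((1 - (q : ℂ) ^ ((i : ℂ) + k + 2 * x)) * (1 - (q : ℂ) ^ ((i : ℂ) + k + 1 - 2 * x)))

/-!
Write `μ(x) = R(2x, k+2x) · R(1-2x, k+1-2x)` with `R(a, b) = (q^a; q)_∞ / (q^b; q)_∞`, and let
`R_n(a, b) = (q^a; q)_n / (q^b; q)_n`.
Peeling `n` factors off each infinite product, `R(a, b) = R_n(a, b) · R(a+n, b+n)`, gives for
every `x` the functional equation `μ(x) · R_n(1-2x-n, k+1-2x-n) = μ(x+n/2) · R_n(2x, k+2x)`.
Near `x = -(k+n)/2` both finite products are continuous and, `k` being generic, the left one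
does not vanish; so the regularized value of `μ` at `-(k+n)/2` is its value at `-k/2` times
the ratio of the two finite products there, which simplifies to `t^{-n} ∏ (1-t²qⁱ)/(1-qⁱ)`.
The point `(k+j)/2` is the mirror image of `-(k+j-1)/2` under `μ(1/2 - x) = μ(x)`.
-/

open Topology Asymptotics

/-- No condition on `a` and `b` is needed: a term with vanishing denominator is `0`, and a
product of terms tending geometrically to `1` converges even if some of them are `0`. -/
lemma multipliable_one_sub_mul_pow_div {𝕜 : Type*} [NormedField 𝕜] [CompleteSpace 𝕜]
    {r : 𝕜} (hr : ‖r‖ < 1) (a b : 𝕜) :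
    Multipliable fun i : ℕ => (1 - a * r ^ i) / (1 - b * r ^ i) := by
  have hden : Tendsto (fun i : ℕ => 1 - b * r ^ i) atTop (𝓝 1) := by
    simpa using ((tendsto_pow_atTop_nhds_zero_of_norm_lt_one hr).const_mul b).const_sub 1
  have hinv : (fun i : ℕ => (1 - b * r ^ i)⁻¹) =O[atTop] fun _ => (1 : 𝕜) :=
    (hden.inv₀ one_ne_zero).isBigO_one 𝕜
  have hdiff : (fun i : ℕ => (1 - a * r ^ i) / (1 - b * r ^ i) - 1) =O[atTop]
      fun i => ‖r‖ ^ i := by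
    have hmain : (fun i : ℕ => (b - a) * r ^ i * (1 - b * r ^ i)⁻¹) =O[atTop]
        fun i => ‖r‖ ^ i := by
      simpa [norm_pow] using
        (((isBigO_refl (fun i : ℕ => r ^ i) atTop).const_mul_left (b - a)).mul hinv).norm_right
    refine hmain.congr' ?_ EventuallyEq.rfl
    filter_upwards [hden.eventually_ne one_ne_zero] with i hi
    field_simp
    ring
  simpa using multipliable_one_add_of_summable
    (summable_of_isBigO_nat (summable_geometric_of_lt_one (norm_nonneg r) hr) hdiff.norm_left)

lemma Homeomorph.tendsto_nhdsNE {X Y : Type*} [TopologicalSpace X] [TopologicalSpace Y]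
    (h : X ≃ₜ Y) {x : X} {y : Y} (hxy : h x = y) : Tendsto h (𝓝[≠] x) (𝓝[≠] y) :=
  hxy ▸ (h.map_punctured_nhds_eq x).le

lemma div_div_one_sub_inv_eq {K : Type*} [Field K] {t v : K} (ht : t ≠ 0) (hv : v ≠ 0) (htv : t * v ≠ 1) :
    (1 - (t * v)⁻¹) / (1 - v⁻¹) / ((1 - t * v) / (1 - t ^ 2 * v)) =
      t⁻¹ * ((1 - t ^ 2 * v) / (1 - v)) := by
  have htv' : 1 - t * v ≠ 0 := sub_ne_zero.2 htv.symm
  have one_sub_inv (z : K) (hz : z ≠ 0) : 1 - z⁻¹ = -z⁻¹ * (1 - z) := by field_simp; ring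
  rw [one_sub_inv _ (mul_ne_zero ht hv), one_sub_inv _ hv]
  field_simp

section RealBase

variable {q : ℝ}

lemma ofReal_cpow_ne_one_of_re_ne_zero (hq : 0 < q) (hq1 : q < 1) {z : ℂ} (hz : z.re ≠ 0) :
    (q : ℂ) ^ z ≠ 1 := by
  intro h
  have hnorm := congrArg norm h
  rw [Complex.norm_cpow_eq_rpow_re_of_pos hq, norm_one] at hnorm
  rcases hz.lt_or_gt with hz | hz
  · exact (Real.one_lt_rpow_of_pos_of_lt_one_of_neg hq hq1 hz).ne' hnorm
  · exact (Real.rpow_lt_one hq.le hq1 hz).ne hnorm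

namespace QPochhammer

/-- `(q^a; q)_∞ / (q^b; q)_∞`. -/
noncomputable def ratio (q : ℝ) (a b : ℂ) : ℂ :=
  ∏' i : ℕ, (1 - (q : ℂ) ^ (a + i)) / (1 - (q : ℂ) ^ (b + i))

/-- `(q^a; q)_n / (q^b; q)_n`. -/
noncomputable def ratioFin (q : ℝ) (a b : ℂ) (n : ℕ) : ℂ :=
  ∏ m ∈ Finset.range n, (1 - (q : ℂ) ^ (a + m)) / (1 - (q : ℂ) ^ (b + m))

lemma multipliable_ratio (hq : 0 < q) (hq1 : q < 1) (a b : ℂ) :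
    Multipliable fun i : ℕ => (1 - (q : ℂ) ^ (a + i)) / (1 - (q : ℂ) ^ (b + i)) := by
  have hq0 : (q : ℂ) ≠ 0 := by exact_mod_cast hq.ne'
  simpa only [Complex.cpow_add _ _ hq0, Complex.cpow_natCast] using
    multipliable_one_sub_mul_pow_div (r := (q : ℂ)) (by simpa [abs_of_pos hq]) _ _

lemma ratio_eq_mul_ratio_add_one (hq : 0 < q) (hq1 : q < 1) (a b : ℂ) :
    ratio q a b = (1 - (q : ℂ) ^ a) / (1 - (q : ℂ) ^ b) * ratio q (a + 1) (b + 1) := by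
  have hshift (c : ℂ) (i : ℕ) : c + ((i + 1 : ℕ) : ℂ) = c + 1 + i := by push_cast; ring
  rw [ratio, tprod_eq_zero_mul']
  · simp only [ratio, Nat.cast_zero, add_zero, hshift]
  · simpa only [hshift] using multipliable_ratio hq hq1 (a + 1) (b + 1)

lemma ratioFin_succ (a b : ℂ) (n : ℕ) :
    ratioFin q a b (n + 1) =
      (1 - (q : ℂ) ^ a) / (1 - (q : ℂ) ^ b) * ratioFin q (a + 1) (b + 1) n := by
  rw [ratioFin, Finset.prod_range_succ', mul_comm, ratioFin]
  push_cast
  simp only [add_zero, add_assoc, add_comm (1 : ℂ)]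

lemma ratioFin_succ_right (a b : ℂ) (n : ℕ) :
    ratioFin q a b (n + 1) =
      ratioFin q a b n * ((1 - (q : ℂ) ^ (a + n)) / (1 - (q : ℂ) ^ (b + n))) :=
  Finset.prod_range_succ _ _

lemma ratio_eq_ratioFin_mul (hq : 0 < q) (hq1 : q < 1) (n : ℕ) (a b : ℂ) :
    ratio q a b = ratioFin q a b n * ratio q (a + n) (b + n) := by
  induction n generalizing a b with
  | zero => simp [ratioFin]
  | succ n ih =>
    rw [ratio_eq_mul_ratio_add_one hq hq1, ih, ratioFin_succ, mul_assoc]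
    push_cast
    simp only [add_assoc, add_comm (1 : ℂ)]

lemma ratioFin_ne_zero {a b : ℂ} {n : ℕ} (ha : ∀ m < n, (q : ℂ) ^ (a + m) ≠ 1)
    (hb : ∀ m < n, (q : ℂ) ^ (b + m) ≠ 1) : ratioFin q a b n ≠ 0 :=
  Finset.prod_ne_zero_iff.2 fun m hm => div_ne_zero
    (sub_ne_zero.2 (ha m (Finset.mem_range.1 hm)).symm)
    (sub_ne_zero.2 (hb m (Finset.mem_range.1 hm)).symm)

lemma continuousAt_ratioFin (hq : 0 < q) {f g : ℂ → ℂ} {x₀ : ℂ} {n : ℕ}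
    (hf : ContinuousAt f x₀) (hg : ContinuousAt g x₀)
    (hne : ∀ m < n, (q : ℂ) ^ (g x₀ + m) ≠ 1) :
    ContinuousAt (fun x => ratioFin q (f x) (g x) n) x₀ := by
  have hq0 : (q : ℂ) ≠ 0 := by exact_mod_cast hq.ne'
  refine tendsto_finsetProd _ fun m hm => ?_
  exact (continuousAt_const.sub ((hf.add continuousAt_const).const_cpow (.inl hq0))).div
    (continuousAt_const.sub ((hg.add continuousAt_const).const_cpow (.inl hq0)))
    (sub_ne_zero.2 (hne m (Finset.mem_range.1 hm)).symm)

lemma ratioFin_neg_div_ratioFin (hq : 0 < q) {k : ℂ}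
    (h2 : ∀ n : ℤ, (q : ℂ) ^ (k + (n : ℂ)) ≠ 1) (n : ℕ) :
    ratioFin q (-k - n) (-n) n / ratioFin q (k + 1) (2 * k + 1) n =
      ((q : ℂ) ^ k) ^ (-(n : ℤ)) * ∏ i ∈ Finset.range n,
        (1 - ((q : ℂ) ^ k) ^ 2 * (q : ℂ) ^ ((i : ℂ) + 1)) /
          (1 - (q : ℂ) ^ ((i : ℂ) + 1)) := by
  have hq0 : (q : ℂ) ≠ 0 := by exact_mod_cast hq.ne'
  induction n with
  | zero => simp [ratioFin]
  | succ n ih =>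
    set t := (q : ℂ) ^ k
    set v := (q : ℂ) ^ ((n : ℂ) + 1)
    have hcpow (z w : ℂ) : (q : ℂ) ^ (z + w) = (q : ℂ) ^ z * (q : ℂ) ^ w :=
      Complex.cpow_add _ _ hq0
    have hu : (q : ℂ) ^ (k + 1 + n) = t * v := by rw [← hcpow]; ring_nf
    have hw : (q : ℂ) ^ (2 * k + 1 + n) = t ^ 2 * v := by rw [sq, ← hcpow, ← hcpow]; ring_nf
    have hu' : (q : ℂ) ^ (-k - ↑(n + 1)) = (t * v)⁻¹ := by
      rw [← hcpow, ← Complex.cpow_neg]; push_cast; ring_nf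
    have hv' : (q : ℂ) ^ (-↑(n + 1) : ℂ) = v⁻¹ := by
      rw [← Complex.cpow_neg]; push_cast; ring_nf
    have htv : t * v ≠ 1 := by
      rw [← hu]; convert h2 (n + 1) using 2; push_cast; ring
    have hnum : ratioFin q (-k - ↑(n + 1)) (-↑(n + 1)) (n + 1) =
        (1 - (t * v)⁻¹) / (1 - v⁻¹) * ratioFin q (-k - n) (-n) n := by
      rw [ratioFin_succ, hu', hv']; congr 2 <;> push_cast <;> ring
    have hden : ratioFin q (k + 1) (2 * k + 1) (n + 1) =
        ratioFin q (k + 1) (2 * k + 1) n * ((1 - t * v) / (1 - t ^ 2 * v)) := by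
      rw [ratioFin_succ_right, hu, hw]
    have ht : t ≠ 0 := Complex.cpow_ne_zero_iff.2 (.inl hq0)
    have hv : v ≠ 0 := Complex.cpow_ne_zero_iff.2 (.inl hq0)
    rw [hnum, hden, mul_comm (ratioFin q (k + 1) (2 * k + 1) n), mul_div_mul_comm, ih,
      div_div_one_sub_inv_eq ht hv htv, Finset.prod_range_succ]
    push_cast
    rw [neg_add, zpow_add₀ ht, zpow_neg_one]
    ring

end QPochhammer

open QPochhammer

variable {k : ℂ}

lemma muC_eq_ratio_mul (hq : 0 < q) (hq1 : q < 1) (x : ℂ) :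
    muC q k x = ratio q (2 * x) (k + 2 * x) * ratio q (1 - 2 * x) (k + 1 - 2 * x) := by
  rw [ratio, ratio, ← (multipliable_ratio hq hq1 _ _).tprod_mul (multipliable_ratio hq hq1 _ _),
    muC]
  refine tprod_congr fun i => ?_
  rw [div_mul_div_comm]
  ring_nf

lemma muC_one_half_sub (x : ℂ) : muC q k (1 / 2 - x) = muC q k x := by
  refine tprod_congr fun i => ?_
  ring_nf

lemma muC_mul_ratioFin (hq : 0 < q) (hq1 : q < 1) (x : ℂ) (n : ℕ) :
    muC q k x * ratioFin q (1 - 2 * x - n) (k + 1 - 2 * x - n) n =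
      muC q k (x + n / 2) * ratioFin q (2 * x) (k + 2 * x) n := by
  have hleft := ratio_eq_ratioFin_mul hq hq1 n (2 * x) (k + 2 * x)
  have hright := ratio_eq_ratioFin_mul hq hq1 n (1 - 2 * x - n) (k + 1 - 2 * x - n)
  rw [sub_add_cancel, sub_add_cancel] at hright
  have hshift : ratio q (2 * (x + n / 2)) (k + 2 * (x + n / 2)) *
      ratio q (1 - 2 * (x + n / 2)) (k + 1 - 2 * (x + n / 2)) =
      ratio q (2 * x + n) (k + 2 * x + n) * ratio q (1 - 2 * x - n) (k + 1 - 2 * x - n) := by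
    congr 2 <;> ring
  rw [muC_eq_ratio_mul hq hq1, muC_eq_ratio_mul hq hq1, hshift, hleft, hright]
  ring

lemma tendsto_one_sub_cpow_mul_muC (hq : 0 < q) (hq1 : q < 1)
    (h1 : ∀ n : ℤ, (q : ℂ) ^ (2 * k + (n : ℂ)) ≠ 1)
    (h2 : ∀ n : ℤ, (q : ℂ) ^ (k + (n : ℂ)) ≠ 1) {B : ℂ}
    (hB : Tendsto (fun x : ℂ => (1 - (q : ℂ) ^ (2 * x + k)) * muC q k x) (𝓝[≠] (-k / 2))
      (𝓝 B)) (n : ℕ) :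
    Tendsto (fun x : ℂ => (1 - (q : ℂ) ^ (k + n + 2 * x)) * muC q k x)
      (𝓝[≠] (-(k + n) / 2))
      (𝓝 ((((q : ℂ) ^ k) ^ (-(n : ℤ)) * ∏ i ∈ Finset.range n,
          (1 - ((q : ℂ) ^ k) ^ 2 * (q : ℂ) ^ ((i : ℂ) + 1)) /
            (1 - (q : ℂ) ^ ((i : ℂ) + 1))) * B)) := by
  set x₀ := -(k + n) / 2 with hx₀
  set R₁ : ℂ → ℂ := fun x => ratioFin q (2 * x) (k + 2 * x) n
  set R₂ : ℂ → ℂ := fun x => ratioFin q (1 - 2 * x - n) (k + 1 - 2 * x - n) n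
  have hR₁ : R₁ x₀ = ratioFin q (-k - n) (-n) n := by
    simp only [R₁, hx₀]; congr 1 <;> ring
  have hR₂ : R₂ x₀ = ratioFin q (k + 1) (2 * k + 1) n := by
    simp only [R₂, hx₀]; congr 1 <;> ring
  have hR₁cont : ContinuousAt R₁ x₀ := by
    refine continuousAt_ratioFin hq (by fun_prop) (by fun_prop) fun m hm => ?_
    refine ofReal_cpow_ne_one_of_re_ne_zero hq hq1 ?_
    rw [show k + 2 * x₀ + m = ((m - n : ℝ) : ℂ) by push_cast; ring, Complex.ofReal_re]
    exact sub_ne_zero.2 (by exact_mod_cast hm.ne)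
  have hR₂cont : ContinuousAt R₂ x₀ := by
    refine continuousAt_ratioFin hq (by fun_prop) (by fun_prop) fun m _ => ?_
    convert h1 (1 + m) using 2; push_cast; ring
  have hR₂ne : R₂ x₀ ≠ 0 := by
    rw [hR₂]
    refine ratioFin_ne_zero (fun m _ => ?_) (fun m _ => ?_)
    · convert h2 (1 + m) using 2; push_cast; ring
    · convert h1 (1 + m) using 2; push_cast; ring
  have hshift : Tendsto (· + (n : ℂ) / 2) (𝓝[≠] x₀) (𝓝[≠] (-k / 2)) :=
    (Homeomorph.addRight ((n : ℂ) / 2)).tendsto_nhdsNE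
      (by simp only [Homeomorph.coe_addRight]; ring)
  have hlim := ((hB.comp hshift).mul (hR₁cont.tendsto.mono_left nhdsWithin_le_nhds)).div
    (hR₂cont.tendsto.mono_left nhdsWithin_le_nhds) hR₂ne
  rw [mul_div_assoc, hR₁, hR₂, ratioFin_neg_div_ratioFin hq h2, mul_comm] at hlim
  refine hlim.congr' ?_
  filter_upwards [nhdsWithin_le_nhds (hR₂cont.eventually_ne hR₂ne)] with x hx
  change (1 - (q : ℂ) ^ (2 * (x + n / 2) + k)) * muC q k (x + n / 2) * R₁ x / R₂ x = _
  rw [div_eq_iff hx, show 2 * (x + n / 2) + k = k + n + 2 * x by ring, mul_assoc,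
    ← muC_mul_ratioFin hq hq1, mul_assoc]

end RealBase

/-- `μ^•` at a pole `y` of `μ` is encoded as the limit at `y` of `μ` times the denominator
factor vanishing at `y`; thus `B = μ^•(-k/2)`. -/
theorem mu_bullet_ratios_general (q : ℝ) (k : ℂ) (j : ℕ) (hq : 0 < q) (hq1 : q < 1)
    (hj : 1 ≤ j)
    (h1 : ∀ n : ℤ, (q : ℂ) ^ (2 * k + (n : ℂ)) ≠ 1)
    (h2 : ∀ n : ℤ, (q : ℂ) ^ (k + (n : ℂ)) ≠ 1)
    (B : ℂ)
    (hB : Tendsto (fun x : ℂ => (1 - (q : ℂ) ^ (2 * x + k)) * muC q k x)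
      (nhdsWithin (-k/2) {(-k/2)}ᶜ) (nhds B)) :
    Tendsto (fun x : ℂ => (1 - (q : ℂ) ^ (k + (j : ℂ) - 2 * x)) * muC q k x)
      (nhdsWithin ((k + (j : ℂ))/2) {((k + (j : ℂ))/2)}ᶜ)
      (nhds ((((q : ℂ) ^ k) ^ (-((j : ℤ) - 1)) *
        ∏ i ∈ Finset.range (j - 1),
          (1 - ((q : ℂ) ^ k) ^ 2 * (q : ℂ) ^ ((i : ℂ) + 1)) / (1 - (q : ℂ) ^ ((i : ℂ) + 1))) * B))
    ∧
    Tendsto (fun x : ℂ => (1 - (q : ℂ) ^ (k + (j : ℂ) + 2 * x)) * muC q k x)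
      (nhdsWithin (-(k + (j : ℂ))/2) {(-(k + (j : ℂ))/2)}ᶜ)
      (nhds ((((q : ℂ) ^ k) ^ (-(j : ℤ)) *
        ∏ i ∈ Finset.range j,
          (1 - ((q : ℂ) ^ k) ^ 2 * (q : ℂ) ^ ((i : ℂ) + 1)) / (1 - (q : ℂ) ^ ((i : ℂ) + 1))) * B)) := by
  refine ⟨?_, tendsto_one_sub_cpow_mul_muC hq hq1 h1 h2 hB j⟩
  obtain ⟨n, rfl⟩ := Nat.exists_eq_add_of_le' hj
  have hreflect : Tendsto (1 / 2 - ·) (𝓝[≠] ((k + ↑(n + 1)) / 2)) (𝓝[≠] (-(k + n) / 2)) :=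
    (Homeomorph.subLeft (1 / 2 : ℂ)).tendsto_nhdsNE
      (by rw [Homeomorph.subLeft_apply]; push_cast; ring)
  rw [show -(((n + 1 : ℕ) : ℤ) - 1) = -(n : ℤ) by push_cast; ring, Nat.add_sub_cancel]
  refine ((tendsto_one_sub_cpow_mul_muC hq hq1 h1 h2 hB n).comp hreflect).congr fun x => ?_
  rw [Function.comp_apply, muC_one_half_sub]
  congr 3
  push_cast
  ring

/-- The ratios of regularized values of `μ^•` at the double affine residual points
`±(k+j)/2` and `-k/2`:  `μ^•((k+j)/2)/μ^•(-k/2) = t^{-(j-1)} ∏_{i=1}^{j-1}(1-t²qⁱ)/(1-qⁱ)`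
and `μ^•(-(k+j)/2)/μ^•(-k/2) = t^{-j} ∏_{i=1}^{j}(1-t²qⁱ)/(1-qⁱ)`, where `t = q^k` and
the value of `μ^•` at a (simple) pole `y` of `μ` is the limit of `μ` multiplied by the
vanishing denominator factor. -/
theorem mu_bullet_ratios (q : ℝ) (k : ℂ) (j : ℕ) (hq : 0 < q) (hq1 : q < 1)
    (hj : 1 ≤ j) (hk : k.re < 0)
    (h1 : ∀ n : ℤ, (q : ℂ) ^ (2 * k + (n : ℂ)) ≠ 1)
    (h2 : ∀ n : ℤ, (q : ℂ) ^ (k + (n : ℂ)) ≠ 1)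
    (B : ℂ)
    (hB : Tendsto (fun x : ℂ => (1 - (q : ℂ) ^ (2 * x + k)) * muC q k x)
      (nhdsWithin (-k/2) {(-k/2)}ᶜ) (nhds B)) :
    Tendsto (fun x : ℂ => (1 - (q : ℂ) ^ (k + (j : ℂ) - 2 * x)) * muC q k x)
      (nhdsWithin ((k + (j : ℂ))/2) {((k + (j : ℂ))/2)}ᶜ)
      (nhds ((((q : ℂ) ^ k) ^ (-((j : ℤ) - 1)) *
        ∏ i ∈ Finset.range (j - 1),
          (1 - ((q : ℂ) ^ k) ^ 2 * (q : ℂ) ^ ((i : ℂ) + 1)) / (1 - (q : ℂ) ^ ((i : ℂ) + 1))) * B))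
    ∧
    Tendsto (fun x : ℂ => (1 - (q : ℂ) ^ (k + (j : ℂ) + 2 * x)) * muC q k x)
      (nhdsWithin (-(k + (j : ℂ))/2) {(-(k + (j : ℂ))/2)}ᶜ)
      (nhds ((((q : ℂ) ^ k) ^ (-(j : ℤ)) *
        ∏ i ∈ Finset.range j,
          (1 - ((q : ℂ) ^ k) ^ 2 * (q : ℂ) ^ ((i : ℂ) + 1)) / (1 - (q : ℂ) ^ ((i : ℂ) + 1))) * B)) :=
  mu_bullet_ratios_general q k j hq hq1 hj h1 h2 B hB
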